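/- Asymptotic uniformity decomposition: let a = h(x,x⁺) and let b₁, b₂, ... be i.i.d. samples of h(x, X⁻) with X⁻ ∼ p, where h is bounded. Then (log(e^a + ∑_{i=1}^M e^{bᵢ}) - log M) converges almost surely as M → ∞ to log 𝔼_{X⁻∼p}[e^{h(x,X⁻)}]. Hence the normalized InfoNCE loss converges to the alignment term plus the uniformity term log 𝔼 e^{h}. -/

import Mathlib

open MeasureTheory Filter ProbabilityTheory
open scoped Topology

/-!
Dividing the sum inside the logarithm by `M`, the quantity becomes
`log (e^a / M + (1/M) ∑ e^{bᵢ})`. The first term tends to `0`, the second tends almost surely to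
`𝔼[e^h] > 0` by the strong law of large numbers, and `log` is continuous at that limit.
-/

theorem Real.tendsto_log_sub_log_natCast_of_tendsto_div {u : ℕ → ℝ} {L : ℝ} (hL : L ≠ 0)
    (hu : Tendsto (fun n : ℕ => u n / n) atTop (𝓝 L)) :
    Tendsto (fun n : ℕ => Real.log (u n) - Real.log n) atTop (𝓝 (Real.log L)) := by
  refine ((Real.continuousAt_log hL).tendsto.comp hu).congr' ?_
  filter_upwards [hu.eventually_ne hL] with n hn
  exact Real.log_div (div_ne_zero_iff.1 hn).1 (div_ne_zero_iff.1 hn).2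

theorem strong_law_ae_comp_of_map_eq {Ω X : Type*} [MeasurableSpace Ω]
    [MeasurableSpace X] {μ : Measure Ω} {p : Measure X} {Xs : ℕ → Ω → X}
    (hXs : ∀ i, AEMeasurable (Xs i) μ) (hindep : Pairwise fun i j => IndepFun (Xs i) (Xs j) μ)
    (hdist : ∀ i, μ.map (Xs i) = p) {f : X → ℝ} (hf : Measurable f) (hfp : Integrable f p) :
    ∀ᵐ ω ∂μ, Tendsto (fun n : ℕ => (∑ i ∈ Finset.range n, f (Xs i ω)) / n) atTop
      (𝓝 (∫ y, f y ∂p)) := by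
  have hint : Integrable (f ∘ Xs 0) μ :=
    (integrable_map_measure hf.aestronglyMeasurable (hXs 0)).1 (hdist 0 ▸ hfp)
  have hident : ∀ i, IdentDistrib (f ∘ Xs i) (f ∘ Xs 0) μ μ := fun i =>
    (IdentDistrib.mk (hXs i) (hXs 0) (by rw [hdist i, hdist 0])).comp hf
  have hmean : ∫ ω, f (Xs 0 ω) ∂μ = ∫ y, f y ∂p := by
    rw [← hdist 0, integral_map (hXs 0) hf.aestronglyMeasurable]
  simpa only [Function.comp_apply, hmean] using
    strong_law_ae_real (fun i => f ∘ Xs i) hint (fun i j hij => (hindep hij).comp hf hf) hident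

theorem integrable_exp_of_abs_le {X : Type*} [MeasurableSpace X] {p : Measure X}
    [IsFiniteMeasure p] {g : X → ℝ} (hg : Measurable g) {C : ℝ} (hC : ∀ y, |g y| ≤ C) :
    Integrable (fun y => Real.exp (g y)) p :=
  .of_bound hg.exp.aestronglyMeasurable (Real.exp C) <| .of_forall fun y => by
    rw [Real.norm_eq_abs, abs_of_pos (Real.exp_pos _)]
    exact Real.exp_le_exp.2 (abs_le.1 (hC y)).2

theorem asymptotic_uniformity_decomposition_general
    {X : Type*} [MeasurableSpace X] (p : Measure X) [IsProbabilityMeasure p]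
    (h : X → X → ℝ) (hmeas : Measurable (Function.uncurry h))
    (hbdd : ∃ C : ℝ, ∀ x y, |h x y| ≤ C)
    (x xpos : X)
    {Ω : Type*} [MeasurableSpace Ω] (μ : Measure Ω)
    (Xneg : ℕ → Ω → X) (hXmeas : ∀ i, Measurable (Xneg i))
    (hindep : iIndepFun Xneg μ)
    (hdist : ∀ i, μ.map (Xneg i) = p) :
    ∀ᵐ ω ∂μ, Tendsto
      (fun M : ℕ =>
        Real.log (Real.exp (h x xpos)
            + ∑ i ∈ Finset.range M, Real.exp (h x (Xneg i ω)))
          - Real.log M)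
      atTop (nhds (Real.log (∫ y, Real.exp (h x y) ∂p))) := by
  obtain ⟨C, hC⟩ := hbdd
  have hx : Measurable (h x) := hmeas.comp measurable_prodMk_left
  have hint := integrable_exp_of_abs_le (p := p) hx (hC x)
  filter_upwards [strong_law_ae_comp_of_map_eq (fun i => (hXmeas i).aemeasurable)
    (fun i j hij => hindep.indepFun hij) hdist hx.exp hint] with ω hω
  refine Real.tendsto_log_sub_log_natCast_of_tendsto_div (integral_exp_pos hint).ne' ?_
  have hfirst : Tendsto (fun M : ℕ => Real.exp (h x xpos) / M) atTop (𝓝 0) :=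
    tendsto_const_nhds.div_atTop tendsto_natCast_atTop_atTop
  simpa only [add_div, zero_add] using hfirst.add hω

theorem asymptotic_uniformity_decomposition
    {X : Type*} [MeasurableSpace X] (p : Measure X) [IsProbabilityMeasure p]
    (h : X → X → ℝ) (hmeas : Measurable (Function.uncurry h))
    (hbdd : ∃ C : ℝ, ∀ x y, |h x y| ≤ C)
    (x xpos : X)
    {Ω : Type*} [MeasurableSpace Ω] (μ : Measure Ω) [IsProbabilityMeasure μ]
    (Xneg : ℕ → Ω → X) (hXmeas : ∀ i, Measurable (Xneg i))
    (hindep : iIndepFun Xneg μ)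
    (hdist : ∀ i, μ.map (Xneg i) = p) :
    ∀ᵐ ω ∂μ, Tendsto
      (fun M : ℕ =>
        Real.log (Real.exp (h x xpos)
            + ∑ i ∈ Finset.range M, Real.exp (h x (Xneg i ω)))
          - Real.log M)
      atTop (nhds (Real.log (∫ y, Real.exp (h x y) ∂p))) :=
  asymptotic_uniformity_decomposition_general p h hmeas hbdd x xpos μ Xneg hXmeas hindep hdist
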